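/- Let ρ > 0, let Q = (−ρ, ρ) × (−ρ, ρ) ⊂ ℝ² be the open square, let θ ∈ ℝ be such that θ/π is irrational, and let R_φ denote the rotation of ℝ² by angle φ about the origin. Then the set Ω = ⋂_{n ∈ ℤ} R_{nθ}(Q) satisfies ball(0, ρ) ⊆ Ω ⊆ closedBall(0, ρ), where ball(0, ρ) and closedBall(0, ρ) are the open and closed Euclidean balls of radius ρ centered at the origin. -/

import Mathlib

/-!
Rotations are isometries, so the disk `ball 0 ρ ⊆ Q` lies in every rotated square. Conversely,
`x ∈ R_{nθ}(Q)` bounds the first coordinate of `R_{-nθ} x` by `ρ`. As a function of the angle this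
coordinate is continuous and `2π`-periodic, and `ℤθ + 2πℤ` is dense in `ℝ` because `θ / π` is
irrational, so the bound holds for every rotation of `x`, in particular for the one taking `x`
to `(‖x‖, 0)`.
-/

open Real Set

theorem Function.Periodic.mem_of_forall_int_mul_mem {X : Type*} [TopologicalSpace X]
    {f : ℝ → X} {s : Set X} {T θ : ℝ} (hs : IsClosed s) (hf : Continuous f)
    (hT : Function.Periodic f T) (hθ : Irrational (θ / T)) (h : ∀ n : ℤ, f (n * θ) ∈ s)
    (x : ℝ) : f x ∈ s := by
  have hsub : (AddSubgroup.closure {θ, T} : Set ℝ) ⊆ f ⁻¹' s := by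
    rintro _ hy
    obtain ⟨m, k, rfl⟩ := AddSubgroup.mem_closure_pair.1 hy
    simpa only [mem_preimage, zsmul_eq_mul, hT.int_mul k (m * θ)] using h m
  exact (hs.preimage hf).closure_subset_iff.2 hsub (dense_addSubgroupClosure_pair_iff.2 hθ x)

noncomputable def planeRotation (φ : ℝ) (p : EuclideanSpace ℝ (Fin 2)) :
    EuclideanSpace ℝ (Fin 2) :=
  WithLp.toLp 2 ![cos φ * p 0 - sin φ * p 1, sin φ * p 0 + cos φ * p 1]

namespace planeRotation

@[simp]
theorem apply_zero (φ : ℝ) (p : EuclideanSpace ℝ (Fin 2)) :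
    planeRotation φ p 0 = cos φ * p 0 - sin φ * p 1 := rfl

@[simp]
theorem apply_one (φ : ℝ) (p : EuclideanSpace ℝ (Fin 2)) :
    planeRotation φ p 1 = sin φ * p 0 + cos φ * p 1 := rfl

theorem comp_apply (φ ψ : ℝ) (p : EuclideanSpace ℝ (Fin 2)) :
    planeRotation φ (planeRotation ψ p) = planeRotation (φ + ψ) p := by
  ext i
  fin_cases i <;> simp [cos_add, sin_add] <;> ring

@[simp]
theorem zero_apply (p : EuclideanSpace ℝ (Fin 2)) : planeRotation 0 p = p := by
  ext i
  fin_cases i <;> simp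

theorem mem_image_iff {φ : ℝ} {s : Set (EuclideanSpace ℝ (Fin 2))}
    {x : EuclideanSpace ℝ (Fin 2)} : x ∈ planeRotation φ '' s ↔ planeRotation (-φ) x ∈ s := by
  constructor
  · rintro ⟨q, hq, rfl⟩
    simpa [comp_apply] using hq
  · exact fun hx => ⟨_, hx, by simp [comp_apply]⟩

theorem norm_apply (φ : ℝ) (p : EuclideanSpace ℝ (Fin 2)) : ‖planeRotation φ p‖ = ‖p‖ := by
  simp only [EuclideanSpace.norm_eq, Fin.sum_univ_two, Real.norm_eq_abs, sq_abs, apply_zero,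
    apply_one]
  congr 1
  linear_combination (p 0 ^ 2 + p 1 ^ 2) * sin_sq_add_cos_sq φ

theorem continuous_apply_zero (p : EuclideanSpace ℝ (Fin 2)) :
    Continuous fun φ => planeRotation φ p 0 := by
  simp only [apply_zero]
  fun_prop

theorem periodic_apply_zero (p : EuclideanSpace ℝ (Fin 2)) :
    Function.Periodic (fun φ => planeRotation φ p 0) (2 * π) := by
  intro φ
  simp

theorem norm_le_of_forall_apply_zero_le {x : EuclideanSpace ℝ (Fin 2)} {c : ℝ}
    (h : ∀ φ, planeRotation φ x 0 ≤ c) : ‖x‖ ≤ c := by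
  set z : ℂ := ⟨x 0, x 1⟩
  have hre : ‖z‖ * cos z.arg = x 0 := Complex.norm_mul_cos_arg z
  have him : ‖z‖ * sin z.arg = x 1 := Complex.norm_mul_sin_arg z
  have hnorm : ‖x‖ = ‖z‖ := by
    simp [EuclideanSpace.norm_eq, Fin.sum_univ_two, Complex.norm_def, Complex.normSq_apply, z, sq]
  have hrot : planeRotation (-z.arg) x 0 = ‖z‖ := by
    rw [apply_zero, cos_neg, sin_neg, ← hre, ← him]
    linear_combination ‖z‖ * sin_sq_add_cos_sq z.arg
  rw [hnorm, ← hrot]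
  exact h _

end planeRotation

theorem ball_subset_openSquare (ρ : ℝ) :
    Metric.ball (0 : EuclideanSpace ℝ (Fin 2)) ρ ⊆
      {p | p 0 ∈ Ioo (-ρ) ρ ∧ p 1 ∈ Ioo (-ρ) ρ} := by
  intro p hp
  rw [mem_ball_zero_iff] at hp
  have hcoord (i : Fin 2) : p i ∈ Ioo (-ρ) ρ :=
    abs_lt.1 ((PiLp.norm_apply_le p i).trans_lt hp)
  exact ⟨hcoord 0, hcoord 1⟩

theorem iInter_rotated_squares_between_balls_general
    (ρ : ℝ)
    (Q : Set (EuclideanSpace ℝ (Fin 2)))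
    (hQ : Q = {p | p 0 ∈ Set.Ioo (-ρ) ρ ∧ p 1 ∈ Set.Ioo (-ρ) ρ})
    (θ : ℝ) (hθ : Irrational (θ / π))
    (Rot : ℝ → EuclideanSpace ℝ (Fin 2) → EuclideanSpace ℝ (Fin 2))
    (hRot : ∀ φ p, Rot φ p = ![cos φ * p 0 - sin φ * p 1,
                               sin φ * p 0 + cos φ * p 1])
    (Ω : Set (EuclideanSpace ℝ (Fin 2)))
    (hΩ : Ω = ⋂ n : ℤ, Rot (n * θ) '' Q) :
    Metric.ball (0 : EuclideanSpace ℝ (Fin 2)) ρ ⊆ Ω ∧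
      Ω ⊆ Metric.closedBall (0 : EuclideanSpace ℝ (Fin 2)) ρ := by
  obtain rfl : Rot = planeRotation := funext₂ fun φ p => WithLp.ofLp_injective 2 (hRot φ p)
  subst hQ hΩ
  constructor
  · intro x hx
    refine mem_iInter.2 fun n => planeRotation.mem_image_iff.2 (ball_subset_openSquare ρ ?_)
    rwa [mem_ball_zero_iff, planeRotation.norm_apply, ← mem_ball_zero_iff]
  · intro x hx
    have hθ' : Irrational (-θ / (2 * π)) := by
      simpa [neg_div, div_div, mul_comm] using ((hθ.div_natCast two_ne_zero).neg)
    have hbound (n : ℤ) : planeRotation (n * -θ) x 0 ∈ Iic ρ := by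
      rw [mul_neg]
      exact (planeRotation.mem_image_iff.1 (mem_iInter.1 hx n)).1.2.le
    exact mem_closedBall_zero_iff.2 <| planeRotation.norm_le_of_forall_apply_zero_le fun φ =>
      (planeRotation.periodic_apply_zero x).mem_of_forall_int_mul_mem isClosed_Iic
        (planeRotation.continuous_apply_zero x) hθ' hbound φ

/-- For the open square `Q = (-ρ, ρ) × (-ρ, ρ)` and `θ` with `θ/π` irrational, the set
`Ω = ⋂_{n ∈ ℤ} R_{nθ}(Q)` (where `R_φ` is rotation by `φ`) satisfies
`ball 0 ρ ⊆ Ω ⊆ closedBall 0 ρ`. -/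
theorem iInter_rotated_squares_between_balls
    (ρ : ℝ) (hρ : 0 < ρ)
    (Q : Set (EuclideanSpace ℝ (Fin 2)))
    (hQ : Q = {p | p 0 ∈ Set.Ioo (-ρ) ρ ∧ p 1 ∈ Set.Ioo (-ρ) ρ})
    (θ : ℝ) (hθ : Irrational (θ / π))
    (Rot : ℝ → EuclideanSpace ℝ (Fin 2) → EuclideanSpace ℝ (Fin 2))
    (hRot : ∀ φ p, Rot φ p = ![cos φ * p 0 - sin φ * p 1,
                               sin φ * p 0 + cos φ * p 1])
    (Ω : Set (EuclideanSpace ℝ (Fin 2)))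
    (hΩ : Ω = ⋂ n : ℤ, Rot (n * θ) '' Q) :
    Metric.ball (0 : EuclideanSpace ℝ (Fin 2)) ρ ⊆ Ω ∧
      Ω ⊆ Metric.closedBall (0 : EuclideanSpace ℝ (Fin 2)) ρ :=
  iInter_rotated_squares_between_balls_general ρ Q hQ θ hθ Rot hRot Ω hΩ
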